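/- The open unit ball of ℝ³ with the operation ⋆ is a quasigroup (in fact a loop with unit 0): for all β₂, β₃ ∈ ℝ³ with ‖β₂‖ < 1 and ‖β₃‖ < 1 there exists a unique x with ‖x‖ < 1 and x ⋆ β₂ = β₃; and for all β₁, β₃ ∈ ℝ³ with ‖β₁‖ < 1 and ‖β₃‖ < 1 there exists a unique y with ‖y‖ < 1 and β₁ ⋆ y = β₃, explicitly given by y = (−β₁) ⋆ β₃. -/

import Mathlib

open Matrix

noncomputable section

/-- Euclidean dot product on `ℝ³`. -/
def dot3 (u v : Fin 3 → ℝ) : ℝ := ∑ i, u i * v i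

/-- The Lorentz factor `γ(β) = 1/√(1 - ‖β‖²)`. -/
def gam (β : Fin 3 → ℝ) : ℝ := 1 / Real.sqrt (1 - dot3 β β)

/-- The Lorentz boost with velocity `β`, as a 4×4 matrix over `Unit ⊕ Fin 3`
(the `Unit` index is the time coordinate): time-time entry `γ`, time-space and
space-time entries `γ βᵢ`, space-space entries `δᵢⱼ + (γ²/(1+γ)) βᵢ βⱼ`. -/
def boost (β : Fin 3 → ℝ) : Matrix (Unit ⊕ Fin 3) (Unit ⊕ Fin 3) ℝ :=
  Matrix.fromBlocks (Matrix.of fun _ _ => gam β)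
    (Matrix.of fun _ j => gam β * β j)
    (Matrix.of fun i _ => gam β * β i)
    ((1 : Matrix (Fin 3) (Fin 3) ℝ) + ((gam β) ^ 2 / (1 + gam β)) • Matrix.vecMulVec β β)

/-- The spatial rotation `R(D) = diag(1, D)` as a 4×4 matrix. -/
def rot (D : Matrix (Fin 3) (Fin 3) ℝ) : Matrix (Unit ⊕ Fin 3) (Unit ⊕ Fin 3) ℝ :=
  Matrix.fromBlocks 1 0 0 D

/-- Relativistic composition of velocities:
`β₁ ⋆ β₂ = [β₁ + γ₁⁻¹ β₂ + (γ₁/(1+γ₁)) (β₁·β₂) β₁] / (1 + β₁·β₂)`. -/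
def vcomp (β₁ β₂ : Fin 3 → ℝ) : Fin 3 → ℝ :=
  (1 / (1 + dot3 β₁ β₂)) •
    (β₁ + (gam β₁)⁻¹ • β₂ + (gam β₁ / (1 + gam β₁)) • dot3 β₁ β₂ • β₁)

end

/-!
The pair `(γ(β), γ(β) β)` is the 4-velocity of `β`, and a velocity in the ball is determined by
its proper velocity `γ(β) β`. The 4-velocity of `a ⋆ b` is the Lorentz boost by `a` applied to
that of `b` (`gam_vcomp`, `properVel_vcomp`); as the boosts by `a` and `-a` are inverse to each
other, `(-a) ⋆ (a ⋆ b) = b`, which settles left division.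

For right division write `x = w ⋆ w` with `w = γ(x) x / (1 + γ(x))` the Einstein half of `x`.
If `x ⋆ b = c`, then `w = (γ(c) c - γ(b) b) / (γ(b) + γ(c))`, so `x` is determined by `b` and `c`.
Conversely, for this `w` the velocity `x = w ⋆ w` solves `x ⋆ b = c`, because
`c ↦ (γ(c) c - γ(b) b) / (γ(b) + γ(c))` is injective on the ball: `γ(b) + γ(c)` can be read off
from its value `w` as `2 γ(b) (1 + b·w) / (1 - ‖w‖²)`.
-/

lemma dot3_eq_dotProduct (u v : Fin 3 → ℝ) : dot3 u v = u ⬝ᵥ v := rfl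

lemma dot3_neg_neg (u v : Fin 3 → ℝ) : dot3 (-u) (-v) = dot3 u v := neg_dotProduct_neg u v

lemma dot3_self_nonneg (u : Fin 3 → ℝ) : 0 ≤ dot3 u u :=
  Finset.sum_nonneg fun i _ => mul_self_nonneg (u i)

lemma one_add_dot3_pos {u v : Fin 3 → ℝ} (hu : dot3 u u < 1) (hv : dot3 v v < 1) :
    0 < 1 + dot3 u v := by
  have h := dot3_self_nonneg (u + v)
  simp only [dot3_eq_dotProduct, add_dotProduct, dotProduct_add, dotProduct_comm v u] at *
  linarith

section Gamma

noncomputable def properVel (u : Fin 3 → ℝ) : Fin 3 → ℝ := gam u • u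

variable {u v : Fin 3 → ℝ}

lemma gam_pos (hu : dot3 u u < 1) : 0 < gam u :=
  one_div_pos.2 (Real.sqrt_pos.2 (sub_pos.2 hu))

lemma gam_sq_mul_one_sub (hu : dot3 u u < 1) : gam u ^ 2 * (1 - dot3 u u) = 1 := by
  rw [gam, div_pow, Real.sq_sqrt (sub_pos.2 hu).le, one_pow, one_div_mul_cancel (sub_pos.2 hu).ne']

lemma dot3_self_eq_one_sub_inv_gam_sq (hu : dot3 u u < 1) :
    dot3 u u = 1 - (gam u)⁻¹ ^ 2 := by
  have h := gam_sq_mul_one_sub hu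
  have := (gam_pos hu).ne'
  field_simp
  linear_combination -h

lemma gam_eq_of_sq_mul_one_sub {g : ℝ} (hg : 0 < g) (h : g ^ 2 * (1 - dot3 u u) = 1) :
    gam u = g := by
  have h' : 1 - dot3 u u = g⁻¹ ^ 2 := by
    field_simp
    linear_combination h
  rw [gam, h', Real.sqrt_sq (inv_pos.2 hg).le, one_div, inv_inv]

lemma gam_neg (u : Fin 3 → ℝ) : gam (-u) = gam u := by
  rw [gam, gam, dot3_neg_neg]

lemma gam_sq_eq_one_add_properVel (hu : dot3 u u < 1) :
    gam u ^ 2 = 1 + dot3 (properVel u) (properVel u) := by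
  have h := gam_sq_mul_one_sub hu
  simp only [properVel, dot3_eq_dotProduct, smul_dotProduct, dotProduct_smul, smul_eq_mul] at h ⊢
  linear_combination h

lemma eq_of_properVel_eq (hu : dot3 u u < 1) (hv : dot3 v v < 1)
    (h : properVel u = properVel v) : u = v := by
  have hsq : gam u ^ 2 = gam v ^ 2 := by
    rw [gam_sq_eq_one_add_properVel hu, gam_sq_eq_one_add_properVel hv, h]
  have hγ : gam u = gam v := (pow_left_inj₀ (gam_pos hu).le (gam_pos hv).le two_ne_zero).1 hsq
  rw [properVel, properVel, hγ] at h
  exact smul_right_injective _ (gam_pos hv).ne' h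

end Gamma

section Composition

variable {a b : Fin 3 → ℝ}

lemma one_add_dot3_sq_mul_one_sub_vcomp (ha : dot3 a a < 1) (hb : dot3 b b < 1) :
    (1 + dot3 a b) ^ 2 * (1 - dot3 (vcomp a b) (vcomp a b)) =
      (1 - dot3 a a) * (1 - dot3 b b) := by
  have haa := dot3_self_eq_one_sub_inv_gam_sq ha
  have hD := (one_add_dot3_pos ha hb).ne'
  have hγ := (gam_pos ha).ne'
  have hγ' : 1 + gam a ≠ 0 := by linarith [gam_pos ha]
  simp only [vcomp, dot3_eq_dotProduct, add_dotProduct, dotProduct_add, smul_dotProduct,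
    dotProduct_smul, smul_eq_mul, dotProduct_comm b a] at haa hD ⊢
  rw [haa]
  field_simp
  ring

lemma vcomp_mem_ball (ha : dot3 a a < 1) (hb : dot3 b b < 1) :
    dot3 (vcomp a b) (vcomp a b) < 1 := by
  have h := one_add_dot3_sq_mul_one_sub_vcomp ha hb
  have hD := pow_pos (one_add_dot3_pos ha hb) 2
  have : 0 < (1 - dot3 a a) * (1 - dot3 b b) := mul_pos (sub_pos.2 ha) (sub_pos.2 hb)
  nlinarith

lemma gam_vcomp (ha : dot3 a a < 1) (hb : dot3 b b < 1) :
    gam (vcomp a b) = gam a * gam b * (1 + dot3 a b) := by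
  refine gam_eq_of_sq_mul_one_sub
    (mul_pos (mul_pos (gam_pos ha) (gam_pos hb)) (one_add_dot3_pos ha hb)) ?_
  linear_combination (gam a * gam b) ^ 2 * one_add_dot3_sq_mul_one_sub_vcomp ha hb +
    gam b ^ 2 * (1 - dot3 b b) * gam_sq_mul_one_sub ha + gam_sq_mul_one_sub hb

lemma properVel_vcomp (ha : dot3 a a < 1) (hb : dot3 b b < 1) :
    properVel (vcomp a b) = properVel b +
      (gam a * gam b + gam a ^ 2 / (1 + gam a) * dot3 a (properVel b)) • a := by
  have hγ := (gam_pos ha).ne'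
  have hγ' : 1 + gam a ≠ 0 := by linarith [gam_pos ha]
  have hD := (one_add_dot3_pos ha hb).ne'
  rw [properVel, gam_vcomp ha hb, properVel]
  ext i
  simp only [vcomp, dot3_eq_dotProduct, dotProduct_smul, smul_eq_mul, Pi.add_apply,
    Pi.smul_apply] at hD ⊢
  field_simp
  ring

theorem neg_vcomp_vcomp (ha : dot3 a a < 1) (hb : dot3 b b < 1) :
    vcomp (-a) (vcomp a b) = b := by
  have hna : dot3 (-a) (-a) < 1 := by rwa [dot3_neg_neg]
  have hc := vcomp_mem_ball ha hb
  have haa := dot3_self_eq_one_sub_inv_gam_sq ha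
  have hγ := (gam_pos ha).ne'
  have hγ' : 1 + gam a ≠ 0 := by linarith [gam_pos ha]
  refine eq_of_properVel_eq (vcomp_mem_ball hna hc) hb ?_
  rw [properVel_vcomp hna hc, gam_neg, properVel_vcomp ha hb, gam_vcomp ha hb]
  simp only [properVel, dot3_eq_dotProduct, neg_dotProduct, dotProduct_add, dotProduct_smul,
    smul_eq_mul] at haa ⊢
  rw [haa]
  ext i
  simp only [Pi.add_apply, Pi.smul_apply, Pi.neg_apply, smul_eq_mul]
  field_simp
  ring

end Composition

section EinsteinHalf

noncomputable def einsteinHalf (x : Fin 3 → ℝ) : Fin 3 → ℝ := (gam x / (1 + gam x)) • x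

variable {x w : Fin 3 → ℝ}

lemma dot3_einsteinHalf_self (hx : dot3 x x < 1) :
    dot3 (einsteinHalf x) (einsteinHalf x) = (gam x - 1) / (1 + gam x) := by
  have hxx := dot3_self_eq_one_sub_inv_gam_sq hx
  have hγ := (gam_pos hx).ne'
  have hγ' : 1 + gam x ≠ 0 := by linarith [gam_pos hx]
  simp only [einsteinHalf, dot3_eq_dotProduct, smul_dotProduct, dotProduct_smul,
    smul_eq_mul] at hxx ⊢
  rw [hxx]
  field_simp
  ring

lemma einsteinHalf_mem_ball (hx : dot3 x x < 1) :
    dot3 (einsteinHalf x) (einsteinHalf x) < 1 := by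
  rw [dot3_einsteinHalf_self hx, div_lt_one (by linarith [gam_pos hx])]
  linarith

lemma vcomp_self (hw : dot3 w w < 1) : vcomp w w = (2 / (1 + dot3 w w)) • w := by
  have hcoef : 1 + (gam w)⁻¹ + gam w / (1 + gam w) * dot3 w w = 2 := by
    have hγ := (gam_pos hw).ne'
    have hγ' : 1 + gam w ≠ 0 := by linarith [gam_pos hw]
    rw [dot3_self_eq_one_sub_inv_gam_sq hw]
    field_simp
    ring
  ext i
  simp only [vcomp, Pi.smul_apply, Pi.add_apply, smul_eq_mul]
  linear_combination (w i / (1 + dot3 w w)) * hcoef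

lemma vcomp_einsteinHalf_self (hx : dot3 x x < 1) :
    vcomp (einsteinHalf x) (einsteinHalf x) = x := by
  have hγ := (gam_pos hx).ne'
  have hγ' : 1 + gam x ≠ 0 := by linarith [gam_pos hx]
  rw [vcomp_self (einsteinHalf_mem_ball hx), dot3_einsteinHalf_self hx, einsteinHalf, smul_smul]
  convert one_smul ℝ x
  rw [show 1 + (gam x - 1) / (1 + gam x) = 2 * gam x / (1 + gam x) by field_simp; ring]
  field_simp

lemma einsteinHalf_vcomp_self (hw : dot3 w w < 1) : einsteinHalf (vcomp w w) = w := by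
  have hd := dot3_self_nonneg w
  have hγ := gam_pos hw
  have h1 : 1 + dot3 w w ≠ 0 := by positivity
  have h2 : 1 + gam w * gam w * (1 + dot3 w w) ≠ 0 := by positivity
  rw [einsteinHalf, gam_vcomp hw hw, vcomp_self hw, smul_smul]
  convert one_smul ℝ w
  field_simp
  linear_combination gam_sq_mul_one_sub hw

end EinsteinHalf

section RightDivision

noncomputable def halfRightDiv (b c : Fin 3 → ℝ) : Fin 3 → ℝ :=
  (gam b + gam c)⁻¹ • (properVel c - properVel b)

variable {b c x : Fin 3 → ℝ}

lemma einsteinHalf_eq_halfRightDiv_vcomp (hx : dot3 x x < 1) (hb : dot3 b b < 1) :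
    einsteinHalf x = halfRightDiv b (vcomp x b) := by
  have hγx := gam_pos hx
  have hγb := gam_pos hb
  have hD := one_add_dot3_pos hx hb
  have hs : gam b + gam x * gam b * (1 + dot3 x b) ≠ 0 := by positivity
  rw [halfRightDiv, properVel_vcomp hx hb, add_sub_cancel_left, smul_smul, einsteinHalf,
    gam_vcomp hx hb]
  congr 1
  rw [eq_inv_mul_iff_mul_eq₀ hs]
  simp only [properVel, dot3_eq_dotProduct, dotProduct_smul, smul_eq_mul]
  field_simp
  ring

lemma properVel_eq_add_smul_halfRightDiv (hb : dot3 b b < 1) (hc : dot3 c c < 1) :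
    properVel c = properVel b + (gam b + gam c) • halfRightDiv b c := by
  have hs : gam b + gam c ≠ 0 := by linarith [gam_pos hb, gam_pos hc]
  rw [halfRightDiv, smul_smul, mul_inv_cancel₀ hs, one_smul, add_sub_cancel]

lemma halfRightDiv_mem_ball (hb : dot3 b b < 1) (hc : dot3 c c < 1) :
    dot3 (halfRightDiv b c) (halfRightDiv b c) < 1 := by
  have hs : 0 < gam b + gam c := by linarith [gam_pos hb, gam_pos hc]
  have hbc : 0 < gam b * gam c * (1 + dot3 b c) :=
    mul_pos (mul_pos (gam_pos hb) (gam_pos hc)) (one_add_dot3_pos hb hc)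
  have hb2 := gam_sq_eq_one_add_properVel hb
  have hc2 := gam_sq_eq_one_add_properVel hc
  have hdiff :
      dot3 (properVel c - properVel b) (properVel c - properVel b) < (gam b + gam c) ^ 2 := by
    simp only [properVel, dot3_eq_dotProduct, sub_dotProduct, dotProduct_sub, smul_dotProduct,
      dotProduct_smul, smul_eq_mul, dotProduct_comm b c] at hb2 hc2 hbc ⊢
    nlinarith
  calc dot3 (halfRightDiv b c) (halfRightDiv b c)
      = dot3 (properVel c - properVel b) (properVel c - properVel b) / (gam b + gam c) ^ 2 := by
        simp only [halfRightDiv, dot3_eq_dotProduct, smul_dotProduct, dotProduct_smul, smul_eq_mul]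
        field_simp
    _ < 1 := (div_lt_one (by positivity)).2 hdiff

lemma gam_add_gam_mul_one_sub_dot3_halfRightDiv (hb : dot3 b b < 1) (hc : dot3 c c < 1) :
    (gam b + gam c) * (1 - dot3 (halfRightDiv b c) (halfRightDiv b c)) =
      2 * gam b * (1 + dot3 b (halfRightDiv b c)) := by
  have hs : gam b + gam c ≠ 0 := by linarith [gam_pos hb, gam_pos hc]
  have hb2 := gam_sq_eq_one_add_properVel hb
  have hc2 := gam_sq_eq_one_add_properVel hc
  rw [properVel_eq_add_smul_halfRightDiv hb hc] at hc2
  apply mul_left_cancel₀ hs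
  simp only [properVel, dot3_eq_dotProduct, add_dotProduct, dotProduct_add, smul_dotProduct,
    dotProduct_smul, smul_eq_mul, dotProduct_comm (halfRightDiv b c) b] at hb2 hc2 ⊢
  linear_combination hc2 - hb2

lemma halfRightDiv_injOn (hb : dot3 b b < 1) :
    Set.InjOn (halfRightDiv b) {c | dot3 c c < 1} := by
  intro c hc c' hc' h
  have hw := halfRightDiv_mem_ball hb hc
  have hs : gam b + gam c = gam b + gam c' := by
    refine mul_right_cancel₀ (sub_pos.2 hw).ne' ?_
    rw [gam_add_gam_mul_one_sub_dot3_halfRightDiv hb hc, h,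
      gam_add_gam_mul_one_sub_dot3_halfRightDiv hb hc']
  refine eq_of_properVel_eq hc hc' ?_
  rw [properVel_eq_add_smul_halfRightDiv hb hc, properVel_eq_add_smul_halfRightDiv hb hc', hs, h]

theorem existsUnique_vcomp_eq (hb : dot3 b b < 1) (hc : dot3 c c < 1) :
    ∃! x : Fin 3 → ℝ, dot3 x x < 1 ∧ vcomp x b = c := by
  set w := halfRightDiv b c
  have hw : dot3 w w < 1 := halfRightDiv_mem_ball hb hc
  have hww := vcomp_mem_ball hw hw
  refine ⟨vcomp w w, ⟨hww, halfRightDiv_injOn hb (vcomp_mem_ball hww hb) hc ?_⟩, ?_⟩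
  · rw [← einsteinHalf_eq_halfRightDiv_vcomp hww hb, einsteinHalf_vcomp_self hw]
  · rintro x ⟨hx, hxc⟩
    rw [← vcomp_einsteinHalf_self hx, einsteinHalf_eq_halfRightDiv_vcomp hx hb, hxc]

end RightDivision

theorem vcomp_neg_vcomp {a b : Fin 3 → ℝ} (ha : dot3 a a < 1) (hb : dot3 b b < 1) :
    vcomp a (vcomp (-a) b) = b := by
  simpa using neg_vcomp_vcomp (a := -a) (by rwa [dot3_neg_neg]) hb

/-- The open unit ball of `ℝ³` with the operation `⋆` is a quasigroup (in fact
a loop with unit `0`): the equations `x ⋆ β₂ = β₃` and `β₁ ⋆ y = β₃` have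
unique solutions in the ball, the latter explicitly given by
`y = (−β₁) ⋆ β₃`. -/
theorem vcomp_quasigroup :
    (∀ β₂ β₃ : Fin 3 → ℝ, dot3 β₂ β₂ < 1 → dot3 β₃ β₃ < 1 →
      ∃! x : Fin 3 → ℝ, dot3 x x < 1 ∧ vcomp x β₂ = β₃) ∧
    (∀ β₁ β₃ : Fin 3 → ℝ, dot3 β₁ β₁ < 1 → dot3 β₃ β₃ < 1 →
      (∃! y : Fin 3 → ℝ, dot3 y y < 1 ∧ vcomp β₁ y = β₃) ∧
      dot3 (vcomp (-β₁) β₃) (vcomp (-β₁) β₃) < 1 ∧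
      vcomp β₁ (vcomp (-β₁) β₃) = β₃) := by
  refine ⟨fun β₂ β₃ h₂ h₃ => existsUnique_vcomp_eq h₂ h₃, fun β₁ β₃ h₁ h₃ => ?_⟩
  have h₁' : dot3 (-β₁) (-β₁) < 1 := by rwa [dot3_neg_neg]
  have hball := vcomp_mem_ball h₁' h₃
  have hsol := vcomp_neg_vcomp h₁ h₃
  refine ⟨⟨vcomp (-β₁) β₃, ⟨hball, hsol⟩, ?_⟩, hball, hsol⟩
  rintro y ⟨hy, rfl⟩
  exact (neg_vcomp_vcomp h₁ hy).symm
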